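/- arXiv:2108.00025 — 2 statements merged into one kernel-verified Lean document; each statement's English description precedes it below -/
import Mathlib

section
/- Let A and A' be unital C*-algebras, P₁ a nontrivial symmetric projection in A, P₂ = I_A − P₁, and suppose A satisfies (♠): for j ∈ {1,2}, P_j A X = {0} implies X = 0. Fix an integer n ≥ 2 and let φ: A → A' be a bijective map with φ(I_A) = I_{A'} satisfying (•): φ(p_{n*}(A,B,Ξ,…,Ξ)) = p_{n*}(φ(A),φ(B),φ(Ξ),…,φ(Ξ)) for all A, B ∈ A and Ξ ∈ {P₁, P₂, I_A}. Then φ is *-additive, i.e., φ(A + B) = φ(A) + φ(B) and φ(A*) = φ(A)* for all A, B ∈ A. -/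
/-- The `*`-Lie product `[x,y]_* = xy - y x*`. -/
def starLie {R : Type*} [Ring R] [StarRing R] (x y : R) : R := x * y - y * star x

/-- `pn n a b xi = p_{n*}(a, b, xi, ..., xi)` (with `n - 2` trailing copies of `xi`). -/
def pn {R : Type*} [Ring R] [StarRing R] (n : ℕ) (a b ξ : R) : R :=
  (fun z => starLie z ξ)^[n - 2] (starLie a b)

/-!
Write `e = P₁`, `f = P₂`. Given `a, b`, surjectivity gives a defect `m` with
`φ (a + b + m) = φ a + φ b`; since `p_{n*}` is additive in its first two arguments, every
instance of (•) in which `a, b` occupy one slot transfers to `m`, and injectivity kills `m` as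
soon as `φ` is already known to be additive on the two resulting values of `p_{n*}`.

Testing against `t = e, f` with `ξ = 1` shows `[m, e]_* = [m, f]_* = 0`, so `m` is
self-adjoint, for every pair with `e a e = 0 ∨ e b e = 0` and `f a f = 0 ∨ f b f = 0`. Here the
needed additivity comes from `φ 1 = φ e + φ f`, itself proved with (♠). Testing against
`t = i 1` multiplies `m` by a nonzero imaginary scalar and yields the defect of a pair of the
same kind, which is self-adjoint as well; hence `m = 0`. The corners `e A e` and `f A f` are
handled with (♠), and the Peirce decomposition gives additivity. Finally
`p_{n*}(a, 1, 1, …, 1) = 2^(n-2) (a - a*)` together with `φ 1 = 1` gives `φ (a*) = φ (a)*`.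
-/

theorem mul_iterate_mul_eq_zero {M : Type*} [Mul M] [Zero M] {T : M → M} {p w : M}
    (hT : ∀ z, p * z * p = 0 → p * T z * p = 0) (hw : p * w * p = 0) (m : ℕ) :
    p * T^[m] w * p = 0 :=
  Function.Iterate.rec (fun z => p * z * p = 0) hw hT m

theorem mul_mul_eq_zero_of_mul_eq_zero {M : Type*} [SemigroupWithZero M] {a b : M} (h : a * b = 0)
    (c : M) : a * (b * c) = 0 := by
  rw [← mul_assoc, h, zero_mul]

section StarLie

variable {R : Type*} [Ring R] [StarRing R]

theorem starLie_add_left (x y z : R) : starLie (x + y) z = starLie x z + starLie y z := by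
  simp only [starLie, add_mul, star_add, mul_add]; abel

theorem starLie_add_right (x y z : R) : starLie x (y + z) = starLie x y + starLie x z := by
  simp only [starLie, add_mul, mul_add]; abel

theorem starLie_one (z : R) : starLie z 1 = z - star z := by
  simp [starLie]

theorem star_starLie_of_isSelfAdjoint {ξ : R} (hξ : IsSelfAdjoint ξ) (x : R) :
    star (starLie x ξ) = -starLie x ξ := by
  simp only [starLie, star_sub, star_mul, star_star, hξ.star_eq, neg_sub]

theorem mul_add_star_eq_of_isSelfAdjoint_starLie {t m : R} (h : IsSelfAdjoint (starLie t m)) :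
    t * (m + star m) = (m + star m) * star t := by
  have h' : t * m - m * star t = star m * star t - t * star m := by
    simpa [starLie] using h.star_eq.symm
  rw [sub_eq_sub_iff_add_eq_add] at h'
  rw [mul_add, add_mul, h', add_comm]

def starLieLeft (ξ : R) : R →+ R :=
  AddMonoidHom.mk' (starLie · ξ) fun x y => starLie_add_left x y ξ

theorem pn_add_left (n : ℕ) (a a' b ξ : R) :
    pn n (a + a') b ξ = pn n a b ξ + pn n a' b ξ := by
  rw [pn, starLie_add_left]
  exact iterate_map_add (starLieLeft ξ) _ _ _

theorem pn_add_right (n : ℕ) (a b b' ξ : R) :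
    pn n a (b + b') ξ = pn n a b ξ + pn n a b' ξ := by
  rw [pn, starLie_add_right]
  exact iterate_map_add (starLieLeft ξ) _ _ _

theorem pn_eq_zero_of_starLie_eq_zero {n : ℕ} {a b : R} (h : starLie a b = 0) (ξ : R) :
    pn n a b ξ = 0 := by
  rw [pn, h]
  exact iterate_map_zero (starLieLeft ξ) _

theorem iterate_starLie_one_of_star_eq_neg {s : R} (hs : star s = -s) (m : ℕ) :
    (starLie · 1)^[m] s = 2 ^ m • s := by
  induction m with
  | zero => simp
  | succ m ih =>
    rw [Function.iterate_succ_apply', ih, starLie_one, star_nsmul, hs, smul_neg, sub_neg_eq_add,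
      pow_succ, mul_two, add_smul]

theorem pn_one_of_star_eq_neg {n : ℕ} {a b : R} (h : star (starLie a b) = -starLie a b) :
    pn n a b 1 = 2 ^ (n - 2) • starLie a b :=
  iterate_starLie_one_of_star_eq_neg h _

section TorsionFree

variable [IsAddTorsionFree R]

theorem eq_zero_of_isSelfAdjoint_of_star_eq_neg {x : R} (h₁ : IsSelfAdjoint x)
    (h₂ : star x = -x) : x = 0 := by
  rw [h₁.star_eq] at h₂
  exact self_eq_neg.mp h₂

theorem isSelfAdjoint_of_iterate_starLie_one_eq_zero {w : R} {m : ℕ}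
    (h : (starLie · 1)^[m] w = 0) : IsSelfAdjoint w := by
  cases m with
  | zero => exact (show w = 0 from h) ▸ .zero R
  | succ m =>
    rw [Function.iterate_succ_apply, iterate_starLie_one_of_star_eq_neg
      (star_starLie_of_isSelfAdjoint (.one R) w)] at h
    have h' : starLie w 1 = 0 :=
      IsAddTorsionFree.nsmul_right_injective (pow_ne_zero m two_ne_zero) (by simpa using h)
    rw [starLie_one, sub_eq_zero] at h'
    exact h'.symm

theorem isSelfAdjoint_starLie_of_pn_one_eq_zero {n : ℕ} {a b : R} (h : pn n a b 1 = 0) :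
    IsSelfAdjoint (starLie a b) :=
  isSelfAdjoint_of_iterate_starLie_one_eq_zero h

theorem starLie_eq_zero_of_pn_one_eq_zero {n : ℕ} {a ξ : R} (hξ : IsSelfAdjoint ξ)
    (h : pn n a ξ 1 = 0) : starLie a ξ = 0 :=
  eq_zero_of_isSelfAdjoint_of_star_eq_neg (isSelfAdjoint_starLie_of_pn_one_eq_zero h)
    (star_starLie_of_isSelfAdjoint hξ a)

end TorsionFree

theorem mul_star_mul_eq_zero {p z : R} (hp : IsSelfAdjoint p) (h : p * z * p = 0) :
    p * star z * p = 0 := by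
  simpa [mul_assoc, hp.star_eq] using congrArg star h

theorem mul_starLie_one_mul_eq_zero {p z : R} (hp : IsSelfAdjoint p) (h : p * z * p = 0) :
    p * starLie z 1 * p = 0 := by
  rw [starLie_one, mul_sub, sub_mul, h, mul_star_mul_eq_zero hp h, sub_zero]

theorem mul_starLie_self_mul_eq_zero {p z : R} (hp : IsStarProjection p) (h : p * z * p = 0) :
    p * starLie z p * p = 0 := calc
  p * starLie z p * p = p * z * p * p - p * p * star z * p := by simp only [starLie]; noncomm_ring
  _ = 0 := by rw [h, hp.isIdempotentElem.eq, mul_star_mul_eq_zero hp.isSelfAdjoint h, zero_mul,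
    sub_zero]

theorem mul_starLie_mul_eq_zero {p q : R} (hpq : p * q = 0) (hqp : q * p = 0) (z : R) :
    q * starLie z p * q = 0 := by
  simp [starLie, mul_sub, mul_assoc, hpq, ← mul_assoc q p, hqp]

theorem mul_starLie_mul_of_mul_eq_zero {p q : R} (hp : IsIdempotentElem p) (hqp : q * p = 0)
    (z : R) : q * starLie z p * p = q * z * p := by
  simp only [starLie, mul_sub, mul_assoc, hp.eq, ← mul_assoc q p, hqp, zero_mul, sub_zero]

theorem mul_iterate_starLie_mul {p q : R} (hp : IsIdempotentElem p) (hqp : q * p = 0) (z : R)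
    (m : ℕ) : q * (starLie · p)^[m] z * p = q * z * p :=
  Function.Iterate.rec (fun y => q * y * p = q * z * p) rfl
    (fun y hy => (mul_starLie_mul_of_mul_eq_zero hp hqp y).trans hy) m

end StarLie

section Complex

open Complex

variable {R : Type*} [Ring R] [StarRing R] [Algebra ℂ R] [StarModule ℂ R]

theorem star_I_smul_of_isSelfAdjoint {x : R} (hx : IsSelfAdjoint x) :
    star (I • x) = -(I • x) := by
  rw [star_smul, hx.star_eq, Complex.star_def, conj_I, neg_smul]

theorem starLie_I_smul_one (z : R) : starLie (I • (1 : R)) z = 2 • I • z := by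
  rw [starLie, star_smul, star_one, Complex.star_def, conj_I, smul_one_mul, mul_smul_comm, mul_one,
    neg_smul, sub_neg_eq_add, two_nsmul]

theorem pn_I_smul_one_of_isSelfAdjoint (n : ℕ) {μ : R} (hμ : IsSelfAdjoint μ) :
    pn n (I • (1 : R)) μ 1 = 2 ^ (n - 2) • 2 • I • μ := by
  have hskew : star (2 • I • μ) = -(2 • I • μ) := by
    rw [star_nsmul, star_I_smul_of_isSelfAdjoint hμ, smul_neg]
  rw [pn_one_of_star_eq_neg (by rw [starLie_I_smul_one]; exact hskew), starLie_I_smul_one]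

theorem eq_zero_of_pn_I_smul_one_eq [IsAddTorsionFree R] {n : ℕ} {μ μ' : R}
    (hμ : IsSelfAdjoint μ) (hμ' : IsSelfAdjoint μ') (h : pn n (I • (1 : R)) μ 1 = μ') :
    μ = 0 := by
  rw [pn_I_smul_one_of_isSelfAdjoint n hμ] at h
  have hskew : star μ' = -μ' := by
    rw [← h, star_nsmul, star_nsmul, star_I_smul_of_isSelfAdjoint hμ, smul_neg, smul_neg]
  rw [eq_zero_of_isSelfAdjoint_of_star_eq_neg hμ' hskew] at h
  rw [smul_eq_zero, smul_eq_zero, smul_eq_zero] at h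
  simpa [I_ne_zero] using h

theorem mul_pn_I_smul_one_mul_eq_zero {n : ℕ} {p z : R} (hp : IsSelfAdjoint p)
    (h : p * z * p = 0) : p * pn n (I • (1 : R)) z 1 * p = 0 := by
  refine mul_iterate_mul_eq_zero (fun _ => mul_starLie_one_mul_eq_zero hp) ?_ _
  rw [starLie_I_smul_one, mul_smul_comm, smul_mul_assoc, mul_smul_comm, smul_mul_assoc, h,
    smul_zero, smul_zero]

theorem mul_eq_zero_of_mul_eq_mul_star {u h : R} (h₁ : u * h = h * star u)
    (h₂ : (I • u) * h = h * star (I • u)) : u * h = 0 := by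
  rw [star_smul, Complex.star_def, conj_I, mul_smul_comm, smul_mul_assoc, ← h₁, neg_smul,
    ← sub_eq_zero, sub_neg_eq_add, ← add_smul, smul_eq_zero] at h₂
  exact h₂.resolve_left (by simp [I_ne_zero])

end Complex

section Peirce

variable {R : Type*} [Ring R] [StarRing R] {e f : R}

theorem isSelfAdjoint_of_starLie_eq_zero {m : R} (hef : e + f = 1) (he : starLie m e = 0)
    (hf : starLie m f = 0) : IsSelfAdjoint m := by
  rw [starLie, sub_eq_zero] at he hf
  have h := congrArg₂ (· + ·) he hf
  simp only [← mul_add, ← add_mul, hef, mul_one, one_mul] at h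
  exact h.symm

theorem starLie_eq_starLie_of_mul_mul_eq_zero {a : R} (he : IsStarProjection e) (hef : e + f = 1)
    (ha : e * a * e = 0) (b : R) :
    starLie a e = starLie (b * e - star (a * e)) f ∧
      starLie b e = starLie (b * e - star (a * e)) e := by
  obtain rfl : f = 1 - e := eq_sub_of_add_eq' hef
  have ha' := mul_star_mul_eq_zero he.isSelfAdjoint ha
  simp only [mul_assoc] at ha ha'
  constructor <;>
  simp only [starLie, star_sub, star_mul, star_star, he.isSelfAdjoint.star_eq, mul_sub, sub_mul,
    mul_one, one_mul, mul_assoc, he.isIdempotentElem.eq, he.isIdempotentElem.mul_self_mul, ha,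
    ha'] <;>
  abel

theorem mul_eq_zero_of_mul_add_star_eq_zero [IsAddTorsionFree R] {m : R}
    (hf : IsIdempotentElem f) (h₁ : m * f = f * star m) (h₂ : f * (m + star m) = 0) :
    m * f = 0 ∧ f * m = 0 := by
  have hf' : f * star m = -(f * m) := by rwa [mul_add, add_eq_zero_iff_eq_neg'] at h₂
  have hmf : m * f = -(f * m) := h₁.trans hf'
  have hfm : f * m = -(m * f) := neg_eq_iff_eq_neg.mp hmf.symm
  have hmf0 : m * f = 0 := by
    refine self_eq_neg.mp ?_
    calc m * f = f * (m * f) := by rw [h₁, hf.mul_self_mul]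
      _ = -(m * f) := by rw [← mul_assoc, hfm, neg_mul, mul_assoc, hf.eq]
  exact ⟨hmf0, by rw [hfm, hmf0, neg_zero]⟩

theorem starLie_mul_mul_self_eq_zero (he : IsSelfAdjoint e) (hef : e * f = 0) (hfe : f * e = 0)
    (a : R) : starLie (e * a * e) f = 0 := by
  simp [starLie, star_mul, he.star_eq, mul_assoc, hef, mul_mul_eq_zero_of_mul_eq_zero hfe]

theorem starLie_mul_mul_mul_self_eq_zero (he : IsSelfAdjoint e) (hf : IsSelfAdjoint f)
    (hef : e * f = 0) (hfe : f * e = 0) (t a : R) : starLie (e * t * f) (e * a * e) = 0 := by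
  simp [starLie, star_mul, he.star_eq, hf.star_eq, mul_assoc, mul_mul_eq_zero_of_mul_eq_zero hef,
    mul_mul_eq_zero_of_mul_eq_zero hfe]

theorem mul_pn_mul_eq_zero (he : IsStarProjection e) (hef : e * f = 0)
    (hfe : f * e = 0) (n : ℕ) (a t : R) :
    e * pn n (e * a * e) (f * t * e) e * e = 0 ∧ f * pn n (e * a * e) (f * t * e) e * f = 0 := by
  have hw : starLie (e * a * e) (f * t * e) = -(f * t * e * star a * e) := by
    simp [starLie, star_mul, he.isSelfAdjoint.star_eq, mul_assoc, he.isIdempotentElem.mul_self_mul,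
      mul_mul_eq_zero_of_mul_eq_zero hef]
  rw [pn]
  constructor
  · refine mul_iterate_mul_eq_zero (fun _ => mul_starLie_self_mul_eq_zero he) ?_ _
    rw [hw]
    simp [mul_assoc, mul_mul_eq_zero_of_mul_eq_zero hef]
  · refine mul_iterate_mul_eq_zero (fun z _ => mul_starLie_mul_eq_zero hef hfe z) ?_ _
    rw [hw]
    simp [mul_assoc, hef]

theorem mul_starLie_mul_mul_mul_eq {m : R} (he : IsStarProjection e) (hf : IsIdempotentElem f)
    (hef : e + f = 1) (hmf : m * f = 0) (hfm : f * m = 0) (t : R) :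
    f * starLie m (f * t * e) * e = -(f * t * star m) := by
  have hme : m * e = m := by rw [← add_zero (m * e), ← hmf, ← mul_add, hef, mul_one]
  have hem : e * m = m := by rw [← add_zero (e * m), ← hfm, ← add_mul, hef, one_mul]
  have hme' : e * star m = star m := by
    simpa [he.isSelfAdjoint.star_eq] using congrArg star hme
  have hem' : star m * e = star m := by
    simpa [he.isSelfAdjoint.star_eq] using congrArg star hem
  simp [starLie, mul_sub, mul_assoc, mul_mul_eq_zero_of_mul_eq_zero hfm, hf.mul_self_mul,
    hme', hem']

end Peirce

/-- The hypotheses of the theorem, for a pair of complementary projections `e`, `f`;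
`faithful_left` and `faithful_right` are condition (♠). -/
structure PreservesPn {R R' : Type*} [Ring R] [StarRing R] [Ring R'] [StarRing R'] (n : ℕ)
    (φ : R → R') (e f : R) : Prop where
  injective : Function.Injective φ
  surjective : Function.Surjective φ
  isStarProjection : IsStarProjection e
  add_eq_one : e + f = 1
  faithful_left : ∀ x, (∀ y, e * y * x = 0) → x = 0
  faithful_right : ∀ x, (∀ y, f * y * x = 0) → x = 0
  map_pn : ∀ a b, ∀ ξ ∈ ({e, f, 1} : Set R), φ (pn n a b ξ) = pn n (φ a) (φ b) (φ ξ)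

namespace PreservesPn

section Ring

variable {R R' : Type*} [Ring R] [StarRing R] [Ring R'] [StarRing R'] {n : ℕ} {φ : R → R'}
  {e f : R}

theorem symm (h : PreservesPn n φ e f) : PreservesPn n φ f e where
  injective := h.injective
  surjective := h.surjective
  isStarProjection := eq_sub_of_add_eq' h.add_eq_one ▸ h.isStarProjection.one_sub
  add_eq_one := add_comm f e ▸ h.add_eq_one
  faithful_left := h.faithful_right
  faithful_right := h.faithful_left
  map_pn a b ξ hξ := h.map_pn a b ξ (by rw [Set.insert_comm]; exact hξ)

theorem mul_eq_zero (h : PreservesPn n φ e f) : e * f = 0 := by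
  rw [eq_sub_of_add_eq' h.add_eq_one]
  exact h.isStarProjection.mul_one_sub_self

theorem map_zero (h : PreservesPn n φ e f) : φ 0 = 0 := by
  obtain ⟨a, ha⟩ := h.surjective 0
  have h0 := h.map_pn a 0 1 (by simp)
  rwa [pn_eq_zero_of_starLie_eq_zero (by simp [starLie]), ha,
    pn_eq_zero_of_starLie_eq_zero (by simp [starLie])] at h0

theorem map_add_of_left_eq_zero (h : PreservesPn n φ e f) {u : R} (hu : u = 0) (v : R) :
    φ (u + v) = φ u + φ v := by
  rw [hu, zero_add, h.map_zero, zero_add]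

theorem exists_map_add_add_eq (h : PreservesPn n φ e f) (a b : R) :
    ∃ m, φ (a + b + m) = φ a + φ b := by
  obtain ⟨s, hs⟩ := h.surjective (φ a + φ b)
  exact ⟨s - (a + b), by rwa [add_sub_cancel]⟩

theorem pn_left_eq_zero_of_map_add_add_eq (h : PreservesPn n φ e f) {a b m : R}
    (hm : φ (a + b + m) = φ a + φ b) {t ξ : R} (hξ : ξ ∈ ({e, f, 1} : Set R))
    (hadd : φ (pn n a t ξ + pn n b t ξ) = φ (pn n a t ξ) + φ (pn n b t ξ)) :
    pn n m t ξ = 0 := by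
  have h' : φ (pn n (a + b + m) t ξ) = φ (pn n a t ξ + pn n b t ξ) := by
    rw [h.map_pn _ _ ξ hξ, hm, pn_add_left, hadd, h.map_pn a t ξ hξ, h.map_pn b t ξ hξ]
  have h'' := h.injective h'
  rwa [pn_add_left, pn_add_left, add_eq_left] at h''

theorem pn_right_eq_of_map_add_add_eq (h : PreservesPn n φ e f) {a b m : R}
    (hm : φ (a + b + m) = φ a + φ b) {t ξ : R} (hξ : ξ ∈ ({e, f, 1} : Set R)) {m' : R}
    (hm' : φ (pn n t a ξ + pn n t b ξ + m') = φ (pn n t a ξ) + φ (pn n t b ξ)) :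
    pn n t m ξ = m' := by
  have h' : φ (pn n t (a + b + m) ξ) = φ (pn n t a ξ + pn n t b ξ + m') := by
    rw [h.map_pn _ _ ξ hξ, hm, pn_add_right, hm', h.map_pn t a ξ hξ, h.map_pn t b ξ hξ]
  have h'' := h.injective h'
  rwa [pn_add_right, pn_add_right, add_right_inj] at h''

end Ring

section Complex

open Complex

variable {R R' : Type*} [Ring R] [StarRing R] [Algebra ℂ R] [StarModule ℂ R]
  [IsAddTorsionFree R] [Ring R'] [StarRing R'] {n : ℕ} {φ : R → R'} {e f : R}

theorem mul_eq_zero_of_map_add_add_eq (h : PreservesPn n φ e f) {a b m : R}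
    (hm : φ (e * a * e + b + m) = φ (e * a * e) + φ b) : m * f = 0 ∧ f * m = 0 := by
  have he := h.isStarProjection.isSelfAdjoint
  have hf := h.symm.isStarProjection
  have hef := h.mul_eq_zero
  have hfe := h.symm.mul_eq_zero
  have hmf : starLie m f = 0 := by
    refine starLie_eq_zero_of_pn_one_eq_zero hf.isSelfAdjoint
      (h.pn_left_eq_zero_of_map_add_add_eq hm (by simp) (h.map_add_of_left_eq_zero ?_ _))
    exact pn_eq_zero_of_starLie_eq_zero (starLie_mul_mul_self_eq_zero he hef hfe a) _
  have hsa (t : R) : IsSelfAdjoint (starLie (e * t * f) m) := by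
    refine isSelfAdjoint_starLie_of_pn_one_eq_zero
      (h.pn_right_eq_of_map_add_add_eq hm (by simp) (m' := 0) ?_)
    rw [add_zero]
    exact h.map_add_of_left_eq_zero (pn_eq_zero_of_starLie_eq_zero
      (starLie_mul_mul_mul_self_eq_zero he hf.isSelfAdjoint hef hfe t a) _) _
  refine mul_eq_zero_of_mul_add_star_eq_zero hf.isIdempotentElem
    (by rwa [starLie, sub_eq_zero] at hmf) (h.faithful_left _ fun t => ?_)
  have hI := mul_add_star_eq_of_isSelfAdjoint_starLie (hsa (I • t))
  rw [mul_smul_comm, smul_mul_assoc] at hI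
  simpa only [mul_assoc] using
    mul_eq_zero_of_mul_eq_mul_star (mul_add_star_eq_of_isSelfAdjoint_starLie (hsa t)) hI

theorem map_one_eq_add (h : PreservesPn n φ e f) : φ 1 = φ e + φ f := by
  obtain ⟨m, hm⟩ := h.exists_map_add_add_eq e f
  have he : e * 1 * e = e := by rw [mul_one, h.isStarProjection.isIdempotentElem.eq]
  have hf : f * 1 * f = f := by rw [mul_one, h.symm.isStarProjection.isIdempotentElem.eq]
  have hmf := (h.mul_eq_zero_of_map_add_add_eq (a := 1) (by rwa [he])).1
  have hme := (h.symm.mul_eq_zero_of_map_add_add_eq (a := 1) (b := e) (m := m)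
    (by rwa [hf, add_comm f e, add_comm (φ f)])).1
  have hm0 : m = 0 := by rw [← mul_one m, ← h.add_eq_one, mul_add, hme, hmf, add_zero]
  rwa [hm0, add_zero, h.add_eq_one] at hm

theorem map_pn_add_pn (h : PreservesPn n φ e f) (x : R) :
    φ (pn n x e 1 + pn n x f 1) = φ (pn n x e 1) + φ (pn n x f 1) := calc
  _ = φ (pn n x 1 1) := by rw [← pn_add_right, h.add_eq_one]
  _ = pn n (φ x) (φ e + φ f) (φ 1) := by rw [h.map_pn x 1 1 (by simp), ← h.map_one_eq_add]
  _ = _ := by rw [pn_add_right, h.map_pn x e 1 (by simp), h.map_pn x f 1 (by simp)]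

theorem map_pn_add_pn_of_corner_eq_zero (h : PreservesPn n φ e f) {a b : R}
    (hab : e * a * e = 0 ∨ e * b * e = 0) :
    φ (pn n a e 1 + pn n b e 1) = φ (pn n a e 1) + φ (pn n b e 1) := by
  -- both summands are of the form `pn n x e 1`, `pn n x f 1` for one `x`
  have key {a : R} (ha : e * a * e = 0) (b : R) :
      φ (pn n a e 1 + pn n b e 1) = φ (pn n a e 1) + φ (pn n b e 1) := by
    obtain ⟨h₁, h₂⟩ :=
      starLie_eq_starLie_of_mul_mul_eq_zero h.isStarProjection h.add_eq_one ha b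
    rw [pn, pn, h₁, h₂, ← pn, ← pn, add_comm, h.map_pn_add_pn, add_comm]
  rcases hab with ha | hb
  · exact key ha b
  · rw [add_comm, key hb a, add_comm]

theorem exists_isSelfAdjoint_map_add_add_eq (h : PreservesPn n φ e f) {a b : R}
    (he : e * a * e = 0 ∨ e * b * e = 0) (hf : f * a * f = 0 ∨ f * b * f = 0) :
    ∃ m, IsSelfAdjoint m ∧ φ (a + b + m) = φ a + φ b := by
  obtain ⟨m, hm⟩ := h.exists_map_add_add_eq a b
  refine ⟨m, isSelfAdjoint_of_starLie_eq_zero h.add_eq_one ?_ ?_, hm⟩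
  · exact starLie_eq_zero_of_pn_one_eq_zero h.isStarProjection.isSelfAdjoint
      (h.pn_left_eq_zero_of_map_add_add_eq hm (by simp) (h.map_pn_add_pn_of_corner_eq_zero he))
  · exact starLie_eq_zero_of_pn_one_eq_zero h.symm.isStarProjection.isSelfAdjoint
      (h.symm.pn_left_eq_zero_of_map_add_add_eq hm (by simp)
        (h.symm.map_pn_add_pn_of_corner_eq_zero hf))

theorem map_add_of_corner_eq_zero (h : PreservesPn n φ e f) {a b : R}
    (he : e * a * e = 0 ∨ e * b * e = 0) (hf : f * a * f = 0 ∨ f * b * f = 0) :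
    φ (a + b) = φ a + φ b := by
  have hE := h.isStarProjection.isSelfAdjoint
  have hF := h.symm.isStarProjection.isSelfAdjoint
  obtain ⟨m, hm, hab⟩ := h.exists_isSelfAdjoint_map_add_add_eq he hf
  -- `D z = p_{n*}(i, z, 1, …, 1)` sends the defect `m` of `(a, b)` to the defect of `(D a, D b)`;
  -- both are self-adjoint while `D m` is a nonzero multiple of `i m`.
  obtain ⟨m', hm', hab'⟩ := h.exists_isSelfAdjoint_map_add_add_eq (n := n)
    (a := pn n (I • 1) a 1) (b := pn n (I • 1) b 1)
    (he.imp (mul_pn_I_smul_one_mul_eq_zero hE) (mul_pn_I_smul_one_mul_eq_zero hE))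
    (hf.imp (mul_pn_I_smul_one_mul_eq_zero hF) (mul_pn_I_smul_one_mul_eq_zero hF))
  have hm0 :=
    eq_zero_of_pn_I_smul_one_eq hm hm' (h.pn_right_eq_of_map_add_add_eq hab (by simp) hab')
  rwa [hm0, add_zero] at hab

theorem map_add_corner (h : PreservesPn n φ e f) (a b : R) :
    φ (e * a * e + e * b * e) = φ (e * a * e) + φ (e * b * e) := by
  have he := h.isStarProjection
  have hf := h.symm.isStarProjection
  obtain ⟨m, hm⟩ := h.exists_map_add_add_eq (e * a * e) (e * b * e)
  obtain ⟨hmf, hfm⟩ := h.mul_eq_zero_of_map_add_add_eq hm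
  have hfm' (t : R) : f * t * star m = 0 := by
    obtain ⟨hE, hF⟩ := mul_pn_mul_eq_zero he h.mul_eq_zero h.symm.mul_eq_zero n a t
    have h0 := h.pn_left_eq_zero_of_map_add_add_eq hm (t := f * t * e) (by simp)
      (h.map_add_of_corner_eq_zero (.inl hE) (.inl hF))
    have h1 := mul_iterate_starLie_mul he.isIdempotentElem h.symm.mul_eq_zero
      (starLie m (f * t * e)) (n - 2)
    rwa [← pn, h0, mul_zero, zero_mul,
      mul_starLie_mul_mul_mul_eq he hf.isIdempotentElem h.add_eq_one hmf hfm, zero_eq_neg] at h1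
  have hm0 : m = 0 := star_eq_zero.mp (h.faithful_right _ hfm')
  rwa [hm0, add_zero] at hm

theorem map_eq_add_corners (h : PreservesPn n φ e f) (c : R) :
    φ c = φ (e * c * e) + φ (f * c * e) + (φ (e * c * f) + φ (f * c * f)) := by
  have hef := h.mul_eq_zero
  have hfe := h.symm.mul_eq_zero
  have hef' := mul_mul_eq_zero_of_mul_eq_zero hef
  have hfe' := mul_mul_eq_zero_of_mul_eq_zero hfe
  have hcol (p : R) : c * p = e * c * p + f * c * p := by
    rw [← add_mul, ← add_mul, h.add_eq_one, one_mul]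
  calc φ c = φ (c * e + c * f) := by rw [← mul_add, h.add_eq_one, mul_one]
    _ = φ (c * e) + φ (c * f) := h.map_add_of_corner_eq_zero
      (.inr (by simp [mul_assoc, hfe])) (.inl (by simp [mul_assoc, hef]))
    _ = _ := by
      rw [hcol e, hcol f,
        h.map_add_of_corner_eq_zero (.inr (by simp [mul_assoc, hef']))
          (.inl (by simp [mul_assoc, hfe'])),
        h.map_add_of_corner_eq_zero (.inr (by simp [mul_assoc, hef']))
          (.inl (by simp [mul_assoc, hfe']))]

theorem map_add (h : PreservesPn n φ e f) (a b : R) : φ (a + b) = φ a + φ b := by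
  have hef := h.mul_eq_zero
  have hfe := h.symm.mul_eq_zero
  have hef' := mul_mul_eq_zero_of_mul_eq_zero hef
  have hfe' := mul_mul_eq_zero_of_mul_eq_zero hfe
  have hc (p q : R) : p * (a + b) * q = p * a * q + p * b * q := by rw [mul_add, add_mul]
  rw [h.map_eq_add_corners (a + b), h.map_eq_add_corners a, h.map_eq_add_corners b, hc, hc, hc, hc,
    h.map_add_corner, h.symm.map_add_corner,
    h.map_add_of_corner_eq_zero (a := f * a * e) (.inl (by simp [mul_assoc, hef']))
      (.inl (by simp [mul_assoc, hef])),
    h.map_add_of_corner_eq_zero (a := e * a * f) (.inl (by simp [mul_assoc, hfe]))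
      (.inl (by simp [mul_assoc, hfe']))]
  abel

theorem map_star [IsAddTorsionFree R'] (h : PreservesPn n φ e f) (h₁ : φ 1 = 1) (a : R) :
    φ (star a) = star (φ a) := by
  let Φ : R →+ R' := AddMonoidHom.mk' φ h.map_add
  have key := h.map_pn a 1 1 (by simp)
  rw [h₁, pn_one_of_star_eq_neg (star_starLie_of_isSelfAdjoint (.one R) a),
    pn_one_of_star_eq_neg (star_starLie_of_isSelfAdjoint (.one R') (φ a)), starLie_one,
    starLie_one] at key
  have key' : Φ (2 ^ (n - 2) • (a - star a)) = 2 ^ (n - 2) • (φ a - star (φ a)) := key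
  rw [map_nsmul, map_sub] at key'
  have := IsAddTorsionFree.nsmul_right_injective (pow_ne_zero (n - 2) two_ne_zero) key'
  exact sub_right_injective this

end Complex

end PreservesPn

variable {A A' : Type*}
  [NormedRing A] [StarRing A] [CStarRing A] [NormedAlgebra ℂ A]
  [CompleteSpace A] [StarModule ℂ A]
  [NormedRing A'] [StarRing A'] [CStarRing A'] [NormedAlgebra ℂ A']
  [CompleteSpace A'] [StarModule ℂ A']

theorem stmt0_general
    (P₁ : A) (hP₁proj : P₁ * P₁ = P₁) (hP₁star : star P₁ = P₁)
    (P₂ : A) (hP₂ : P₂ = 1 - P₁)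
    (hspade : ∀ Pj ∈ ({P₁, P₂} : Set A), ∀ X : A, (∀ Y : A, Pj * Y * X = 0) → X = 0)
    (n : ℕ)
    (φ : A → A') (hbij : Function.Bijective φ) (hunit : φ 1 = 1)
    (hbullet : ∀ a b : A, ∀ Ξ ∈ ({P₁, P₂, 1} : Set A),
      φ (pn n a b Ξ) = pn n (φ a) (φ b) (φ Ξ))
    :
    (∀ a b : A, φ (a + b) = φ a + φ b) ∧ (∀ a : A, φ (star a) = star (φ a)) := by
  have : IsAddTorsionFree A := .of_isTorsionFree ℂ A
  have : IsAddTorsionFree A' := .of_isTorsionFree ℂ A'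
  have h : PreservesPn n φ P₁ P₂ :=
    { injective := hbij.injective
      surjective := hbij.surjective
      isStarProjection := ⟨hP₁proj, hP₁star⟩
      add_eq_one := by rw [hP₂, add_sub_cancel]
      faithful_left := hspade P₁ (by simp)
      faithful_right := hspade P₂ (by simp)
      map_pn := hbullet }
  exact ⟨h.map_add, h.map_star hunit⟩

theorem stmt0
    (P₁ : A) (hP₁proj : P₁ * P₁ = P₁) (hP₁star : star P₁ = P₁)
    (hP₁ne0 : P₁ ≠ 0) (hP₁ne1 : P₁ ≠ 1)
    (P₂ : A) (hP₂ : P₂ = 1 - P₁)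
    (hspade : ∀ Pj ∈ ({P₁, P₂} : Set A), ∀ X : A, (∀ Y : A, Pj * Y * X = 0) → X = 0)
    (n : ℕ) (hn : 2 ≤ n)
    (φ : A → A') (hbij : Function.Bijective φ) (hunit : φ 1 = 1)
    (hbullet : ∀ a b : A, ∀ Ξ ∈ ({P₁, P₂, 1} : Set A),
      φ (pn n a b Ξ) = pn n (φ a) (φ b) (φ Ξ))
    :
    (∀ a b : A, φ (a + b) = φ a + φ b) ∧ (∀ a : A, φ (star a) = star (φ a)) :=
  stmt0_general P₁ hP₁proj hP₁star P₂ hP₂ hspade n φ hbij hunit hbullet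
end

section
/- Let A and A' be unital C*-algebras, P₁ a nontrivial symmetric projection in A, P₂ = I_A − P₁, A_{jk} = P_j A P_k, and suppose A satisfies (♠): for j ∈ {1,2}, P_j A X = {0} implies X = 0. Fix an integer n ≥ 2 and let φ: A → A' be a bijective map with φ(I_A) = I_{A'}, φ(λA) = λφ(A) for all λ ∈ ℂ, satisfying (•): φ(p_{n*}(A,B,Ξ,…,Ξ)) = p_{n*}(φ(A),φ(B),φ(Ξ),…,φ(Ξ)) for all A, B ∈ A and Ξ ∈ {P₁, P₂, I_A}. Write Q_j = φ(P_j) and A'_{jk} = Q_j A' Q_k. Then φ(A_{jk}) ⊆ A'_{jk} for all j, k ∈ {1,2}. -/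
lemma Module.End.pow_apply_of_apply_eq_smul {K M : Type*} [CommSemiring K] [AddCommMonoid M]
    [Module K M] {f : Module.End K M} {c : K} {w : M} (hw : f w = c • w) (m : ℕ) :
    (f ^ m) w = c ^ m • w := by
  induction m with
  | zero => simp
  | succ m ih => rw [pow_succ, Module.End.mul_apply, hw, map_smul, ih, smul_smul, pow_succ']

section Anticommutator

variable {R : Type*} [Ring R] [Algebra ℂ R]

def anticommutator (ξ : R) : Module.End ℂ R := LinearMap.mulLeft ℂ ξ + LinearMap.mulRight ℂ ξ

@[simp]
lemma anticommutator_apply (ξ z : R) : anticommutator ξ z = ξ * z + z * ξ := rfl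

lemma pow_anticommutator_apply_pow (ξ : R) (m j : ℕ) :
    (anticommutator ξ ^ m) (ξ ^ j) = (2 : ℂ) ^ m • ξ ^ (j + m) := by
  induction m with
  | zero => simp
  | succ m ih =>
    rw [pow_succ', Module.End.mul_apply, ih, map_smul, anticommutator_apply, ← pow_succ',
      ← pow_succ, ← two_smul ℂ, smul_smul, ← pow_succ, add_assoc]

lemma pow_anticommutator_apply_mul_self {ξ z : R} (hz : z * ξ = z) (m : ℕ) :
    (anticommutator ξ ^ m) z * ξ = (anticommutator ξ ^ m) z := by
  induction m with
  | zero => exact hz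
  | succ m ih =>
    rw [pow_succ', Module.End.mul_apply, anticommutator_apply, add_mul, mul_assoc, ih, ih]

lemma anticommutator_corner_self {p : R} (hp : IsIdempotentElem p) (x : R) :
    anticommutator p (p * x * p) = (2 : ℂ) • (p * x * p) := by
  rw [anticommutator_apply, two_smul, ← mul_assoc, ← mul_assoc, hp.eq, mul_assoc _ p p, hp.eq]

lemma anticommutator_corner_of_mul_eq_zero {p q : R} (hq : IsIdempotentElem q) (hqp : q * p = 0)
    (x : R) : anticommutator q (p * x * q) = (1 : ℂ) • (p * x * q) := by
  rw [anticommutator_apply, one_smul, ← mul_assoc, ← mul_assoc, hqp, zero_mul, zero_mul,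
    zero_add, mul_assoc _ q q, hq.eq]

variable [StarRing R]

lemma star_anticommutator {ξ : R} (hξ : star ξ = ξ) (z : R) :
    star (anticommutator ξ z) = anticommutator ξ (star z) := by
  simp [hξ, add_comm]

lemma starLie_eq_anticommutator {w : R} (hw : star w = -w) (ξ : R) :
    starLie w ξ = anticommutator ξ w := by
  simp [starLie, hw, add_comm]

lemma iterate_starLie_eq_pow_anticommutator {ξ : R} (hξ : star ξ = ξ) (m : ℕ) {w : R}
    (hw : star w = -w) : (fun z => starLie z ξ)^[m] w = (anticommutator ξ ^ m) w := by
  induction m generalizing w with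
  | zero => rfl
  | succ m ih =>
    rw [Function.iterate_succ_apply, starLie_eq_anticommutator hw,
      ih (by rw [star_anticommutator hξ, hw, map_neg]), pow_succ, Module.End.mul_apply]

lemma pn_self_eq {ξ : R} (hξ : star ξ = ξ) (n : ℕ) (a : R) :
    pn n a ξ ξ = (anticommutator ξ ^ (n - 2)) (a * ξ - ξ * star a) :=
  iterate_starLie_eq_pow_anticommutator hξ _ (by simp [starLie, hξ])

variable [StarModule ℂ R]

lemma I_smul_sub_star_I_smul (a : R) :
    Complex.I • a - star (Complex.I • a) = Complex.I • (a + star a) := by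
  simp [star_smul, smul_add]

lemma pn_self_sub_I_smul {ξ : R} (hξ : star ξ = ξ) (n : ℕ) (a : R) :
    pn n a ξ ξ - Complex.I • pn n (Complex.I • a) ξ ξ
      = (2 : ℂ) • (anticommutator ξ ^ (n - 2)) (a * ξ) := by
  have hI : Complex.I • a * ξ - ξ * star (Complex.I • a) = Complex.I • (a * ξ + ξ * star a) := by
    simp [star_smul, smul_add]
  rw [pn_self_eq hξ, pn_self_eq hξ, hI, map_smul, smul_smul, Complex.I_mul_I, neg_one_smul,
    sub_neg_eq_add, ← map_add, ← map_smul]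
  congr 1
  module

lemma pn_self_of_anticommutator_eq_smul {ξ a : R} (hξ : star ξ = ξ) (ha : a * ξ = a) {c : ℂ}
    (hc : star c = c) (hL : anticommutator ξ a = c • a) (n : ℕ) :
    pn n a ξ ξ = c ^ (n - 2) • (a - star a) := by
  have hξa : ξ * star a = star a := by rw [← hξ, ← star_mul, ha]
  have hL' : anticommutator ξ (a - star a) = c • (a - star a) := by
    rw [map_sub, hL, ← star_anticommutator hξ, hL, star_smul, hc, smul_sub]
  rw [pn_self_eq hξ, ha, hξa, Module.End.pow_apply_of_apply_eq_smul hL']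

lemma pn_one_one (n : ℕ) (a : R) : pn n a 1 1 = (2 : ℂ) ^ (n - 2) • (a - star a) :=
  pn_self_of_anticommutator_eq_smul (star_one R) (mul_one a) (by simp) (by simp [two_smul]) n

lemma pn_I_smul_pow_self {ξ : R} (hξ : star ξ = ξ) (n k : ℕ) :
    pn n (Complex.I • ξ ^ k) ξ ξ
      = ((2 : ℂ) ^ (n - 2) * (2 * Complex.I)) • ξ ^ (k + (n - 2) + 1) := by
  rw [pn_self_eq hξ, star_smul, star_pow, hξ, Complex.star_def, Complex.conj_I, smul_mul_assoc,
    mul_smul_comm, neg_smul, sub_neg_eq_add, ← pow_succ, ← pow_succ', ← two_smul ℂ,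
    smul_smul, map_smul, pow_anticommutator_apply_pow, smul_smul, mul_comm (2 * Complex.I),
    add_right_comm]

end Anticommutator

section PnPreservingMap

variable {R S : Type*} [Ring R] [StarRing R] [Algebra ℂ R] [StarModule ℂ R]
  [Ring S] [StarRing S] [Algebra ℂ S] [StarModule ℂ S] {φ : R → S} {n : ℕ}

lemma map_sub_star (hsmul : ∀ (c : ℂ) (a : R), φ (c • a) = c • φ a) (hone : φ 1 = 1)
    (hpn_one : ∀ a, φ (pn n a 1 1) = pn n (φ a) (φ 1) (φ 1)) (a : R) :
    φ (a - star a) = φ a - star (φ a) := by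
  have h := hpn_one a
  rwa [hone, pn_one_one, pn_one_one, hsmul, smul_right_inj (pow_ne_zero _ two_ne_zero)] at h

lemma map_add_star (hsmul : ∀ (c : ℂ) (a : R), φ (c • a) = c • φ a) (hone : φ 1 = 1)
    (hpn_one : ∀ a, φ (pn n a 1 1) = pn n (φ a) (φ 1) (φ 1)) (a : R) :
    φ (a + star a) = φ a + star (φ a) := by
  have h := map_sub_star hsmul hone hpn_one (Complex.I • a)
  rwa [I_smul_sub_star_I_smul, hsmul, hsmul, I_smul_sub_star_I_smul,
    smul_right_inj Complex.I_ne_zero] at h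

lemma map_star (hsmul : ∀ (c : ℂ) (a : R), φ (c • a) = c • φ a) (hone : φ 1 = 1)
    (hpn_one : ∀ a, φ (pn n a 1 1) = pn n (φ a) (φ 1) (φ 1)) (a : R) :
    φ (star a) = star (φ a) := by
  have hneg : φ (star a - a) = star (φ a) - φ a := by
    rw [← neg_sub, ← neg_one_smul ℂ, hsmul, map_sub_star hsmul hone hpn_one, neg_one_smul,
      neg_sub]
  have h₁ := map_sub_star hsmul hone hpn_one (star a)
  have h₂ := map_add_star hsmul hone hpn_one (star a)
  rw [star_star, hneg] at h₁
  rw [star_star, add_comm, map_add_star hsmul hone hpn_one] at h₂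
  rw [← smul_right_inj (two_ne_zero : (2 : ℂ) ≠ 0), two_smul, two_smul]
  calc φ (star a) + φ (star a)
      = (φ (star a) - star (φ (star a))) + (φ (star a) + star (φ (star a))) := by abel
    _ = star (φ a) + star (φ a) := by rw [← h₁, ← h₂]; abel

lemma isIdempotentElem_map (hsmul : ∀ (c : ℂ) (a : R), φ (c • a) = c • φ a) (hone : φ 1 = 1)
    (hpn_one : ∀ a, φ (pn n a 1 1) = pn n (φ a) (φ 1) (φ 1)) {p : R}
    (hp : IsStarProjection p) (hpn : ∀ a, φ (pn n a p p) = pn n (φ a) (φ p) (φ p)) :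
    IsIdempotentElem (φ p) := by
  have hφp : star (φ p) = φ p := by rw [← map_star hsmul hone hpn_one, hp.isSelfAdjoint.star_eq]
  have hpow : ∀ k ≤ 1, φ p ^ (k + (n - 2) + 1) = φ p := by
    intro k hk
    have hφk : φ (p ^ k) = φ p ^ k := by interval_cases k <;> simp [hone]
    have h := hpn (Complex.I • p ^ k)
    rwa [hsmul, hφk, pn_I_smul_pow_self hφp, pn_I_smul_pow_self hp.isSelfAdjoint.star_eq,
      hp.pow_succ_eq, hsmul, smul_right_inj (by simp), eq_comm] at h
  calc φ p * φ p = φ p * φ p ^ (0 + (n - 2) + 1) := by rw [hpow 0 zero_le_one]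
    _ = φ p ^ (1 + (n - 2) + 1) := by rw [← pow_succ']; ring_nf
    _ = φ p := hpow 1 le_rfl

lemma map_mul_eq_of_anticommutator_eq_smul (hsmul : ∀ (c : ℂ) (a : R), φ (c • a) = c • φ a)
    (hone : φ 1 = 1) (hpn_one : ∀ a, φ (pn n a 1 1) = pn n (φ a) (φ 1) (φ 1)) {q : R}
    (hq : IsStarProjection q) (hpn : ∀ a, φ (pn n a q q) = pn n (φ a) (φ q) (φ q)) {a : R}
    (ha : a * q = a) {c : ℂ} (hc : star c = c) (hc0 : c ≠ 0) (hL : anticommutator q a = c • a) :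
    φ a * φ q = φ a := by
  have hq' := hq.isSelfAdjoint.star_eq
  have hφq : star (φ q) = φ q := by rw [← map_star hsmul hone hpn_one, hq']
  have hIa : Complex.I • a * q = Complex.I • a := by rw [smul_mul_assoc, ha]
  have hIL : anticommutator q (Complex.I • a) = c • Complex.I • a := by
    rw [map_smul, hL, smul_comm]
  have h₁ := hpn a
  have h₂ := hpn (Complex.I • a)
  rw [pn_self_of_anticommutator_eq_smul hq' ha hc hL, hsmul, map_sub_star hsmul hone hpn_one]
    at h₁
  rw [pn_self_of_anticommutator_eq_smul hq' hIa hc hIL, hsmul, map_sub_star hsmul hone hpn_one,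
    hsmul, I_smul_sub_star_I_smul] at h₂
  have hkey : (anticommutator (φ q) ^ (n - 2)) (φ a * φ q) = c ^ (n - 2) • φ a := by
    rw [← smul_right_inj (two_ne_zero : (2 : ℂ) ≠ 0), ← pn_self_sub_I_smul hφq, ← h₁, ← h₂,
      smul_smul, smul_smul, mul_right_comm, Complex.I_mul_I]
    module
  have hinv := pow_anticommutator_apply_mul_self
    (by rw [mul_assoc, (isIdempotentElem_map hsmul hone hpn_one hq hpn).eq] :
      φ a * φ q * φ q = φ a * φ q) (n - 2)
  rwa [hkey, smul_mul_assoc, smul_right_inj (pow_ne_zero _ hc0)] at hinv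

lemma map_corner (hsmul : ∀ (c : ℂ) (a : R), φ (c • a) = c • φ a) (hone : φ 1 = 1)
    (hpn_one : ∀ a, φ (pn n a 1 1) = pn n (φ a) (φ 1) (φ 1)) {p q : R}
    (hp : IsStarProjection p) (hq : IsStarProjection q)
    (hpn_p : ∀ a, φ (pn n a p p) = pn n (φ a) (φ p) (φ p))
    (hpn_q : ∀ a, φ (pn n a q q) = pn n (φ a) (φ q) (φ q)) (hpq : p = q ∨ p * q = 0) (x : R) :
    φ (p * x * q) = φ p * φ (p * x * q) * φ q := by
  obtain ⟨c, hc, hc0, hLq, hLp⟩ : ∃ c : ℂ, star c = c ∧ c ≠ 0 ∧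
      anticommutator q (p * x * q) = c • (p * x * q) ∧
      anticommutator p (q * star x * p) = c • (q * star x * p) := by
    rcases hpq with rfl | hpq
    · exact ⟨2, by simp, two_ne_zero, anticommutator_corner_self hp.isIdempotentElem x,
        anticommutator_corner_self hp.isIdempotentElem _⟩
    · have hqp : q * p = 0 := by
        simpa [hp.isSelfAdjoint.star_eq, hq.isSelfAdjoint.star_eq] using congrArg star hpq
      exact ⟨1, star_one ℂ, one_ne_zero,
        anticommutator_corner_of_mul_eq_zero hq.isIdempotentElem hqp x,
        anticommutator_corner_of_mul_eq_zero hp.isIdempotentElem hpq _⟩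
  have hright := map_mul_eq_of_anticommutator_eq_smul hsmul hone hpn_one hq hpn_q
    (by rw [mul_assoc, hq.isIdempotentElem.eq]) hc hc0 hLq
  have hleft := map_mul_eq_of_anticommutator_eq_smul hsmul hone hpn_one hp hpn_p
    (by rw [mul_assoc, hp.isIdempotentElem.eq]) hc hc0 hLp
  have hstar : q * star x * p = star (p * x * q) := by
    simp [mul_assoc, hp.isSelfAdjoint.star_eq, hq.isSelfAdjoint.star_eq]
  rw [hstar, map_star hsmul hone hpn_one, ← hp.isSelfAdjoint.star_eq,
    map_star hsmul hone hpn_one, ← star_mul, star_inj, hp.isSelfAdjoint.star_eq] at hleft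
  rw [hleft, hright]

end PnPreservingMap

variable {A A' : Type*}
  [NormedRing A] [StarRing A] [CStarRing A] [NormedAlgebra ℂ A]
  [CompleteSpace A] [StarModule ℂ A]
  [NormedRing A'] [StarRing A'] [CStarRing A'] [NormedAlgebra ℂ A']
  [CompleteSpace A'] [StarModule ℂ A']

theorem stmt12_general
    (P₁ : A) (hP₁proj : P₁ * P₁ = P₁) (hP₁star : star P₁ = P₁)
    (P₂ : A) (hP₂ : P₂ = 1 - P₁)
    (n : ℕ)
    (φ : A → A') (hunit : φ 1 = 1)
    (hsmul : ∀ (c : ℂ) (a : A), φ (c • a) = c • φ a)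
    (hbullet : ∀ a b : A, ∀ Ξ ∈ ({P₁, P₂, 1} : Set A),
      φ (pn n a b Ξ) = pn n (φ a) (φ b) (φ Ξ))
    :
    ∀ Pj ∈ ({P₁, P₂} : Set A), ∀ Pk ∈ ({P₁, P₂} : Set A),
      ∀ a : A, (∃ x : A, a = Pj * x * Pk) → ∃ y : A', φ a = φ Pj * y * φ Pk := by
  have hP₁ : IsStarProjection P₁ := ⟨hP₁proj, hP₁star⟩
  have hproj : ∀ P ∈ ({P₁, P₂} : Set A), IsStarProjection P := by
    rintro P (rfl | rfl)
    exacts [hP₁, hP₂ ▸ hP₁.one_sub]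
  have hpn : ∀ P ∈ ({P₁, P₂} : Set A), ∀ a, φ (pn n a P P) = pn n (φ a) (φ P) (φ P) :=
    fun P hP a => hbullet a P P (by rcases hP with rfl | rfl <;> simp)
  have hpn_one : ∀ a, φ (pn n a 1 1) = pn n (φ a) (φ 1) (φ 1) := fun a => hbullet a 1 1 (by simp)
  rintro Pj hPj Pk hPk _ ⟨x, rfl⟩
  refine ⟨_, map_corner hsmul hunit hpn_one (hproj Pj hPj) (hproj Pk hPk) (hpn Pj hPj)
    (hpn Pk hPk) ?_ x⟩
  rcases hPj with rfl | rfl <;> rcases hPk with rfl | rfl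
  all_goals simp [hP₂, hP₁.mul_one_sub_self, hP₁.one_sub_mul_self]

theorem stmt12
    (P₁ : A) (hP₁proj : P₁ * P₁ = P₁) (hP₁star : star P₁ = P₁)
    (hP₁ne0 : P₁ ≠ 0) (hP₁ne1 : P₁ ≠ 1)
    (P₂ : A) (hP₂ : P₂ = 1 - P₁)
    (hspade : ∀ Pj ∈ ({P₁, P₂} : Set A), ∀ X : A, (∀ Y : A, Pj * Y * X = 0) → X = 0)
    (n : ℕ) (hn : 2 ≤ n)
    (φ : A → A') (hbij : Function.Bijective φ) (hunit : φ 1 = 1)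
    (hsmul : ∀ (c : ℂ) (a : A), φ (c • a) = c • φ a)
    (hbullet : ∀ a b : A, ∀ Ξ ∈ ({P₁, P₂, 1} : Set A),
      φ (pn n a b Ξ) = pn n (φ a) (φ b) (φ Ξ))
    :
    ∀ Pj ∈ ({P₁, P₂} : Set A), ∀ Pk ∈ ({P₁, P₂} : Set A),
      ∀ a : A, (∃ x : A, a = Pj * x * Pk) → ∃ y : A', φ a = φ Pj * y * φ Pk :=
  stmt12_general P₁ hP₁proj hP₁star P₂ hP₂ n φ hunit hsmul hbullet
end
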